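/- If f = Σ_α a_α z^α is holomorphic on the unit polydisc in ℂⁿ with |f| ≤ 1, then for every multi-index α ≠ 0, |a_α| ≤ 1 - |a_0|². -/

import Mathlib

/-
For ζ on the torus, the slice w ↦ f (w ζ) is holomorphic on the unit disc with modulus at most 1,
and its Taylor coefficients are c_m(ζ) = ∑_{|β| = m} a_β ζ^β. Averaging over the k-th roots of
unity, u ↦ ∑_i c_{ik}(ζ) u^i is again bounded by 1, so the Schwarz–Pick inequality
|g'(0)| ≤ 1 - |g(0)|² gives |c_k(ζ)| ≤ 1 - |a_0|² for every k ≥ 1. For k = |α|, averaging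
c_k(ζ) ζ^{-α} over ζ ∈ μ_{k+1}ⁿ recovers a_α, because (k+1)-th roots of unity separate the
exponents 0, …, k.
-/

open Complex Finset Metric FormalMultilinearSeries Topology ComplexConjugate

theorem geom_sum_eq_ite_of_pow_eq_one {K : Type*} [Field K] [DecidableEq K] {r : K} {N : ℕ}
    (hr : r ^ N = 1) :
    ∑ i ∈ range N, r ^ i = if r = 1 then (N : K) else 0 := by
  split_ifs with h
  · simp [h]
  · rw [geom_sum_eq h, hr, sub_self, zero_div]

noncomputable def blaschkeFactor (a z : ℂ) : ℂ := (z - a) / (1 - conj a * z)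

theorem one_sub_conj_mul_ne_zero {a z : ℂ} (ha : ‖a‖ < 1) (hz : ‖z‖ ≤ 1) :
    1 - conj a * z ≠ 0 := by
  refine sub_ne_zero.2 fun h => ?_
  have : ‖conj a * z‖ < 1 := by
    rw [norm_mul, RCLike.norm_conj]
    nlinarith [norm_nonneg a, norm_nonneg z]
  simp [← h] at this

theorem norm_blaschkeFactor_le_one {a z : ℂ} (ha : ‖a‖ < 1) (hz : ‖z‖ ≤ 1) :
    ‖blaschkeFactor a z‖ ≤ 1 := by
  have hgap : normSq (1 - conj a * z) - normSq (z - a) = (1 - normSq a) * (1 - normSq z) := by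
    simp only [normSq_apply, sub_re, sub_im, mul_re, mul_im, one_re, one_im, conj_re, conj_im]
    ring
  have hsq : normSq (z - a) ≤ normSq (1 - conj a * z) := by
    have : 0 ≤ (1 - normSq a) * (1 - normSq z) := by
      rw [normSq_eq_norm_sq a, normSq_eq_norm_sq z]
      exact mul_nonneg (by nlinarith [norm_nonneg a]) (by nlinarith [norm_nonneg z])
    linarith
  rw [blaschkeFactor, norm_div, div_le_one (norm_pos_iff.2 (one_sub_conj_mul_ne_zero ha hz)),
    norm_def, norm_def]
  exact Real.sqrt_le_sqrt hsq

theorem differentiableAt_blaschkeFactor {a z : ℂ} (ha : ‖a‖ < 1) (hz : ‖z‖ ≤ 1) :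
    DifferentiableAt ℂ (blaschkeFactor a) z :=
  (differentiableAt_id.sub_const a).div ((differentiableAt_id.const_mul _).const_sub 1)
    (one_sub_conj_mul_ne_zero ha hz)

theorem hasDerivAt_blaschkeFactor_self {a : ℂ} (ha : ‖a‖ < 1) :
    HasDerivAt (blaschkeFactor a) (1 - ‖a‖ ^ 2 : ℂ)⁻¹ a := by
  have hconj : conj a * a = (‖a‖ ^ 2 : ℂ) := by
    rw [mul_comm, mul_conj, normSq_eq_norm_sq]; push_cast; rfl
  have hden := one_sub_conj_mul_ne_zero ha ha.le
  refine (((hasDerivAt_id' a).sub_const a).div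
    (((hasDerivAt_id' a).const_mul (conj a)).const_sub 1) hden).congr_deriv ?_
  rw [hconj] at hden ⊢
  field_simp
  ring

theorem norm_deriv_zero_le_one_sub_norm_sq {F : ℂ → ℂ} (hd : DifferentiableOn ℂ F (ball 0 1))
    (hF : Set.MapsTo F (ball 0 1) (closedBall 0 1)) : ‖deriv F 0‖ ≤ 1 - ‖F 0‖ ^ 2 := by
  have h0 : (0 : ℂ) ∈ ball 0 1 := mem_ball_self one_pos
  have hF0 : ‖F 0‖ ≤ 1 := mem_closedBall_zero_iff.1 (hF h0)
  rcases hF0.lt_or_eq with hlt | heq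
  · set ψ := blaschkeFactor (F 0) ∘ F
    have hFz : ∀ z ∈ ball (0 : ℂ) 1, ‖F z‖ ≤ 1 := fun z hz => mem_closedBall_zero_iff.1 (hF hz)
    have hψd : DifferentiableOn ℂ ψ (ball 0 1) := fun z hz =>
      (differentiableAt_blaschkeFactor hlt (hFz z hz)).comp_differentiableWithinAt z (hd z hz)
    have hψ : Set.MapsTo ψ (ball 0 1) (closedBall (ψ 0) 1) := fun z hz => by
      simpa [ψ, blaschkeFactor] using norm_blaschkeFactor_le_one hlt (hFz z hz)
    have hderiv : deriv ψ 0 = (1 - ‖F 0‖ ^ 2 : ℂ)⁻¹ * deriv F 0 :=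
      ((hasDerivAt_blaschkeFactor_self hlt).comp 0
        (hd.differentiableAt (isOpen_ball.mem_nhds h0)).hasDerivAt).deriv
    have hpos : 0 < 1 - ‖F 0‖ ^ 2 := by nlinarith [norm_nonneg (F 0)]
    have hnorm : ‖(1 - ‖F 0‖ ^ 2 : ℂ)‖ = 1 - ‖F 0‖ ^ 2 := by
      rw [← ofReal_one, ← ofReal_pow, ← ofReal_sub, norm_real, Real.norm_of_nonneg hpos.le]
    have := norm_deriv_le_one_of_mapsTo_ball hψd hψ one_pos
    rwa [hderiv, norm_mul, norm_inv, hnorm, inv_mul_le_iff₀ hpos, mul_one] at this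
  · have hconst : F =ᶠ[𝓝 0] fun _ => F 0 := by
      refine eventually_eq_of_isLocalMax_norm ?_ ?_
      · filter_upwards [isOpen_ball.mem_nhds h0] with z hz
        using hd.differentiableAt (isOpen_ball.mem_nhds hz)
      · filter_upwards [isOpen_ball.mem_nhds h0] with z hz
        simpa [heq] using hF hz
    rw [hconst.deriv_eq, deriv_const, heq]
    norm_num

/-- Taylor coefficients of a function in the Schur class: holomorphic on the unit disc and of
modulus at most `1` there. -/
def IsSchurCoeffs (c : ℕ → ℂ) : Prop :=
  ∀ w : ℂ, ‖w‖ < 1 → ∃ s, HasSum (fun m => c m * w ^ m) s ∧ ‖s‖ ≤ 1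

namespace IsSchurCoeffs

variable {c : ℕ → ℂ}

theorem hasFPowerSeriesOnBall (hc : IsSchurCoeffs c) :
    HasFPowerSeriesOnBall (ofScalarsSum (E := ℂ) c) (ofScalars ℂ c) 0 1 := by
  have hr : 1 ≤ (ofScalars ℂ c).radius := ENNReal.le_of_forall_nnreal_lt fun r hr => by
    obtain ⟨s, hs, -⟩ := hc r (by simpa using hr)
    refine (ofScalars ℂ c).le_radius_of_tendsto (l := 0) ?_
    simpa [ofScalars_norm] using hs.summable.tendsto_atTop_zero.norm
  exact ((ofScalars ℂ c).hasFPowerSeriesOnBall (one_pos.trans_le hr)).mono one_pos hr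

theorem norm_coeff_one_le (hc : IsSchurCoeffs c) : ‖c 1‖ ≤ 1 - ‖c 0‖ ^ 2 := by
  set F := ofScalarsSum (E := ℂ) c
  have hps := hc.hasFPowerSeriesOnBall
  have hd : DifferentiableOn ℂ F (ball 0 1) := by
    simpa [← ENNReal.coe_one, Metric.eball_coe] using hps.differentiableOn
  have hmaps : Set.MapsTo F (ball 0 1) (closedBall 0 1) := fun w hw => by
    obtain ⟨s, hs, hs1⟩ := hc w (mem_ball_zero_iff.1 hw)
    simpa [F, ofScalars_sum_eq, hs.tsum_eq] using hs1
  have hderiv : deriv F 0 = c 1 := by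
    rw [hps.hasFPowerSeriesAt.deriv, ofScalars_apply_eq]
    simp
  simpa [F, hderiv] using norm_deriv_zero_le_one_sub_norm_sq hd hmaps

theorem comp_mul (hc : IsSchurCoeffs c) {k : ℕ} (hk : k ≠ 0) :
    IsSchurCoeffs fun i => c (i * k) := by
  intro u hu
  obtain ⟨w, rfl⟩ : ∃ w : ℂ, w ^ k = u := ⟨u ^ (k⁻¹ : ℂ), cpow_nat_inv_pow u hk⟩
  have hw : ‖w‖ < 1 := by rwa [norm_pow, pow_lt_one_iff_of_nonneg (norm_nonneg w) hk] at hu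
  obtain ⟨η, hη⟩ : ∃ η : ℂ, IsPrimitiveRoot η k := ⟨_, isPrimitiveRoot_exp k hk⟩
  have hrot : ∀ j : ℕ, ‖η ^ j * w‖ < 1 := fun j => by
    rwa [norm_mul, norm_pow, hη.norm'_eq_one hk, one_pow, one_mul]
  choose s hs hs1 using fun j => hc _ (hrot j)
  refine ⟨(k : ℂ)⁻¹ * ∑ j ∈ range k, s j, ?_, ?_⟩
  -- Averaging `F (η ^ j * w)` over the `k`-th roots of unity kills the terms with `¬ k ∣ m`.
  · have hfilter : HasSum (fun m => if k ∣ m then c m * w ^ m else 0)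
        ((k : ℂ)⁻¹ * ∑ j ∈ range k, s j) := by
      refine ((hasSum_sum fun j _ => hs j).mul_left (k : ℂ)⁻¹).congr_fun fun m => ?_
      have hroot : (η ^ m) ^ k = 1 := by
        rw [← pow_mul, mul_comm, pow_mul, hη.pow_eq_one, one_pow]
      have : ∑ j ∈ range k, c m * (η ^ j * w) ^ m
          = c m * w ^ m * ∑ j ∈ range k, (η ^ m) ^ j := by
        rw [mul_sum]
        refine sum_congr rfl fun j _ => ?_
        ring
      rw [this, geom_sum_eq_ite_of_pow_eq_one hroot, if_congr (hη.pow_eq_one_iff_dvd m) rfl rfl]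
      split_ifs
      · field_simp
      · simp
    have hsupp : ∀ m ∉ Set.range (· * k), (if k ∣ m then c m * w ^ m else 0) = 0 :=
      fun m hm => if_neg fun ⟨i, hi⟩ => hm ⟨i, by rw [hi, mul_comm]⟩
    refine ((mul_left_injective₀ hk).hasSum_iff hsupp |>.2 hfilter).congr_fun fun i => ?_
    simp [← pow_mul, mul_comm]
  · calc ‖(k : ℂ)⁻¹ * ∑ j ∈ range k, s j‖ ≤ (k : ℝ)⁻¹ * ∑ j ∈ range k, 1 := by
          rw [norm_mul, norm_inv, Complex.norm_natCast]
          gcongr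
          exact (norm_sum_le _ _).trans (sum_le_sum fun j _ => hs1 j)
      _ = 1 := by simp [hk]

theorem norm_coeff_le (hc : IsSchurCoeffs c) {k : ℕ} (hk : k ≠ 0) :
    ‖c k‖ ≤ 1 - ‖c 0‖ ^ 2 := by
  simpa using (hc.comp_mul hk).norm_coeff_one_le

end IsSchurCoeffs

theorem IsPrimitiveRoot.sum_pow_div_pow {K : Type*} [Field K] {ω : K} {N a b : ℕ}
    (hω : IsPrimitiveRoot ω N) (ha : a < N) (hb : b < N) :
    ∑ s ∈ range N, (ω ^ s) ^ b / (ω ^ s) ^ a = if b = a then (N : K) else 0 := by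
  classical
  have hω0 : ω ≠ 0 := hω.ne_zero (by omega)
  have hroot : (ω ^ b / ω ^ a) ^ N = 1 := by
    rw [div_pow, ← pow_mul, ← pow_mul, mul_comm b, mul_comm a, pow_mul, pow_mul, hω.pow_eq_one,
      one_pow, one_pow, div_one]
  simp_rw [← pow_mul, mul_comm _ b, mul_comm _ a, pow_mul, ← div_pow]
  rw [geom_sum_eq_ite_of_pow_eq_one hroot, div_eq_one_iff_eq (pow_ne_zero _ hω0)]
  exact if_congr ⟨hω.pow_inj hb ha, congrArg _⟩ rfl rfl

theorem norm_coeff_le_of_forall_norm_sum_le {ι : Type*} [Fintype ι] [DecidableEq ι] {ω : ℂ}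
    {N : ℕ} (hω : IsPrimitiveRoot ω N) (hN : N ≠ 0) {S : Finset (ι → ℕ)}
    (hS : ∀ β ∈ S, ∀ j, β j < N) (b : (ι → ℕ) → ℂ) {M : ℝ}
    (hM : ∀ t : ι → ℕ, ‖∑ β ∈ S, b β * ∏ j, (ω ^ t j) ^ β j‖ ≤ M) {α : ι → ℕ} (hα : α ∈ S) :
    ‖b α‖ ≤ M := by
  set T := Fintype.piFinset fun _ : ι => range N
  have hω1 : ‖ω‖ = 1 := hω.norm'_eq_one hN
  have hmonomial : ∀ t : ι → ℕ, ‖∏ j, (ω ^ t j) ^ α j‖ = 1 := fun t => by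
    simp [norm_prod, hω1]
  have hT : (T.card : ℝ) = N ^ Fintype.card ι := by simp [T]
  have hextract : ∑ t ∈ T, (∑ β ∈ S, b β * ∏ j, (ω ^ t j) ^ β j) / ∏ j, (ω ^ t j) ^ α j
      = (N : ℂ) ^ Fintype.card ι * b α := by
    calc _ = ∑ β ∈ S, b β * ∏ j, ∑ s ∈ range N, (ω ^ s) ^ β j / (ω ^ s) ^ α j := by
          simp_rw [prod_univ_sum, sum_div, mul_div_assoc, ← prod_div_distrib, mul_sum]
          exact sum_comm
      _ = ∑ β ∈ S, b β * ∏ j, if β j = α j then (N : ℂ) else 0 := by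
          refine sum_congr rfl fun β hβ => ?_
          simp_rw [hω.sum_pow_div_pow (hS α hα _) (hS β hβ _)]
      _ = (N : ℂ) ^ Fintype.card ι * b α := by
          rw [sum_eq_single_of_mem α hα]
          · simp [mul_comm]
          · intro β _ hne
            obtain ⟨j, hj⟩ := Function.ne_iff.1 hne
            rw [prod_eq_zero (mem_univ j) (if_neg hj), mul_zero]
  have hbound : (N : ℝ) ^ Fintype.card ι * ‖b α‖ ≤ (N : ℝ) ^ Fintype.card ι * M := by
    calc (N : ℝ) ^ Fintype.card ι * ‖b α‖ = ‖(N : ℂ) ^ Fintype.card ι * b α‖ := by simp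
      _ ≤ ∑ t ∈ T, ‖(∑ β ∈ S, b β * ∏ j, (ω ^ t j) ^ β j) / ∏ j, (ω ^ t j) ^ α j‖ :=
          hextract ▸ norm_sum_le _ _
      _ ≤ ∑ t ∈ T, M := sum_le_sum fun t _ => by
          rw [norm_div, hmonomial, div_one]
          exact hM t
      _ = (N : ℝ) ^ Fintype.card ι * M := by rw [sum_const, nsmul_eq_mul, hT]
  exact le_of_mul_le_mul_left hbound (by positivity)

theorem HasSum.sum_antidiagonalTuple {E : Type*} [AddCommMonoid E] [TopologicalSpace E]
    [ContinuousAdd E] [RegularSpace E] {n : ℕ} {g : (Fin n → ℕ) → E} {s : E} (h : HasSum g s) :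
    HasSum (fun m => ∑ β ∈ Nat.antidiagonalTuple n m, g β) s := by
  refine ((Equiv.sigmaFiberEquiv fun β : Fin n → ℕ => ∑ j, β j).hasSum_iff.2 h).sigma
    fun m => ?_
  have hfiber : ∀ β : Fin n → ℕ, ∑ j, β j = m ↔ β ∈ Nat.antidiagonalTuple n m :=
    fun _ => Nat.mem_antidiagonalTuple.symm
  exact (Equiv.subtypeEquivRight hfiber).hasSum_iff.2 (Finset.hasSum _ g)

theorem isSchurCoeffs_slice {n : ℕ} {f : (Fin n → ℂ) → ℂ} {a : (Fin n → ℕ) → ℂ}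
    (hf : ∀ z ∈ ball (0 : Fin n → ℂ) 1,
      HasSum (fun α : Fin n → ℕ => a α * ∏ j, z j ^ α j) (f z))
    (hb : ∀ z ∈ ball (0 : Fin n → ℂ) 1, ‖f z‖ ≤ 1) {ζ : Fin n → ℂ} (hζ : ∀ j, ‖ζ j‖ ≤ 1) :
    IsSchurCoeffs fun m => ∑ β ∈ Nat.antidiagonalTuple n m, a β * ∏ j, ζ j ^ β j := by
  intro w hw
  have hz : w • ζ ∈ ball (0 : Fin n → ℂ) 1 := by
    rw [mem_ball_zero_iff, pi_norm_lt_iff one_pos]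
    intro j
    simpa using (mul_le_of_le_one_right (norm_nonneg w) (hζ j)).trans_lt hw
  refine ⟨f (w • ζ), (hf _ hz).sum_antidiagonalTuple.congr_fun fun m => ?_, hb _ hz⟩
  rw [sum_mul]
  refine sum_congr rfl fun β hβ => ?_
  rw [← Nat.mem_antidiagonalTuple.1 hβ]
  simp [mul_pow, prod_mul_distrib, prod_pow_eq_pow_sum]
  ring

theorem coeff_bound_polydisc (n : ℕ) (f : (Fin n → ℂ) → ℂ) (a : (Fin n → ℕ) → ℂ)
    (hf : ∀ z ∈ Metric.ball (0 : Fin n → ℂ) 1,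
      HasSum (fun α : Fin n → ℕ => a α * ∏ j, z j ^ α j) (f z))
    (hb : ∀ z ∈ Metric.ball (0 : Fin n → ℂ) 1, ‖f z‖ ≤ 1)
    (α : Fin n → ℕ) (hα : α ≠ 0) :
    ‖a α‖ ≤ 1 - ‖a 0‖ ^ 2 := by
  set k := ∑ j, α j
  have hk : k ≠ 0 := by
    contrapose! hα
    exact funext fun j => sum_eq_zero_iff.1 hα j (mem_univ j)
  obtain ⟨ω, hω⟩ : ∃ ω : ℂ, IsPrimitiveRoot ω (k + 1) :=
    ⟨_, isPrimitiveRoot_exp _ k.succ_ne_zero⟩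
  refine norm_coeff_le_of_forall_norm_sum_le hω k.succ_ne_zero
    (S := Nat.antidiagonalTuple n k) (fun β hβ j => ?_) a (fun t => ?_)
    (Nat.mem_antidiagonalTuple.2 rfl)
  · rw [← Nat.mem_antidiagonalTuple.1 hβ, Nat.lt_succ_iff]
    exact single_le_sum (fun _ _ => Nat.zero_le _) (mem_univ j)
  · have hζ : ∀ j, ‖ω ^ t j‖ ≤ 1 := fun j => by
      rw [norm_pow, hω.norm'_eq_one k.succ_ne_zero, one_pow]
    simpa [Nat.antidiagonalTuple_zero_right]
      using (isSchurCoeffs_slice hf hb hζ).norm_coeff_le hk
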